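/- arXiv:1610.06309 — 3 statements merged into one kernel-verified Lean document; each statement's English description precedes it below -/
import Mathlib

section
/- Consider a fork-join system with k parallel servers fed by a renewal arrival process: i.i.d. nonnegative inter-arrival times (a(ν))_{ν ≥ 1} with A(m,n) = Σ_{ν=m}^{n−1} a(ν), and task service times Q_i(ν) ≥ 0 such that for each i ∈ [1,k] the sequence (Q_i(ν))_{ν ≥ 1} is i.i.d. with the same (homogeneous) marginal distribution as Q_1(1), the task service times being independent of the arrivals (no independence across the index i is assumed). Define the sojourn time T(n) = max_{i ∈ [1,k]} max_{m ∈ [1,n]} { Σ_{ν=m}^{n} Q_i(ν) − A(m,n) }. Fix θ > 0 such that E[exp(θ Q_1(1))] · E[exp(−θ a(1))] ≤ 1. Then for all n ≥ 1 and τ ≥ 0, P[T(n) > τ] ≤ k · E[exp(θ Q_1(1))] · exp(−θτ). -/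
/-!
Fix a server `i` and the job `n`. The quantity `Z m = ∑_{ν=m}^{n} Q i ν - ∑_{ν=m}^{n-1} a ν` is a
random walk run backwards from `Z n = Q i n`, whose increments `Q i m - a m` are independent of
the later ones. The stability condition `E[e^{θ Q}] E[e^{-θ a}] ≤ 1` makes `e^{θ Z m}`, for
`m = n, n - 1, …, 1`, a nonnegative supermartingale, so stopping it the first time it reaches
`e^{θ τ}` gives Ville's maximal inequality `P[max_m Z m > τ] ≤ E[e^{θ Q i n}] e^{-θ τ}`. The union
bound over the `k` servers gives the factor `k`.

The supermartingale is handled as a product of `ℝ≥0∞`-valued factors and lower Lebesgue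
integrals, so that no integrability conditions arise along the way.
-/

open MeasureTheory ProbabilityTheory Real Finset
open scoped ENNReal

lemma Finset.prod_Icc_eq_mul_prod_Icc_add_one {M : Type*} [CommMonoid M] (f : ℕ → M) {m n : ℕ}
    (hm : m ≤ n) : ∏ ν ∈ Icc m n, f ν = f m * ∏ ν ∈ Icc (m + 1) n, f ν := by
  rw [← insert_Icc_add_one_left_eq_Icc hm, prod_insert (by simp)]

section Independence

variable {Ω ι : Type*} {mΩ : MeasurableSpace Ω} {μ : Measure Ω}

theorem ProbabilityTheory.iIndep.sup {𝓐 𝓑 : ι → MeasurableSpace Ω} (h𝓐_le : ∀ i, 𝓐 i ≤ mΩ)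
    (h𝓑_le : ∀ i, 𝓑 i ≤ mΩ) (h𝓐 : iIndep 𝓐 μ) (h𝓑 : iIndep 𝓑 μ)
    (h : Indep (⨆ i, 𝓐 i) (⨆ i, 𝓑 i) μ) : iIndep (fun i => 𝓐 i ⊔ 𝓑 i) μ := by
  refine iIndepSets.iIndep (fun i => sup_le (h𝓐_le i) (h𝓑_le i))
    (fun i => Set.image2 (· ∩ ·) {s | MeasurableSet[𝓐 i] s} {t | MeasurableSet[𝓑 i] t})
    (fun i => ?_) (fun i => ?_) ?_
  · rintro _ ⟨s, hs, t, ht, rfl⟩ _ ⟨s', hs', t', ht', rfl⟩ -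
    exact ⟨s ∩ s', hs.inter hs', t ∩ t', ht.inter ht', Set.inter_inter_inter_comm s s' t t'⟩
  · refine le_antisymm (sup_le (fun s hs => ?_) (fun t ht => ?_))
      (MeasurableSpace.generateFrom_le ?_)
    · exact MeasurableSpace.measurableSet_generateFrom ⟨s, hs, _, .univ, Set.inter_univ s⟩
    · exact MeasurableSpace.measurableSet_generateFrom ⟨_, .univ, t, ht, Set.univ_inter t⟩
    · rintro _ ⟨s, hs, t, ht, rfl⟩
      exact (le_sup_left (a := 𝓐 i) _ hs).inter (le_sup_right (a := 𝓐 i) _ ht)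
  · rw [iIndepSets_iff]
    intro S f hf
    choose! s hs t ht hst using hf
    have hs' : ∀ i ∈ S, MeasurableSet[⨆ i, 𝓐 i] (s i) := fun i hi => le_iSup 𝓐 i _ (hs i hi)
    have ht' : ∀ i ∈ S, MeasurableSet[⨆ i, 𝓑 i] (t i) := fun i hi => le_iSup 𝓑 i _ (ht i hi)
    have hinter : ⋂ i ∈ S, f i = (⋂ i ∈ S, s i) ∩ ⋂ i ∈ S, t i := by
      rw [Set.iInter₂_congr fun i hi => (hst i hi).symm]
      simp only [Set.iInter_inter_distrib]
    rw [hinter, (Indep_iff _ _ _).1 h _ _ (Finset.measurableSet_biInter _ hs')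
      (Finset.measurableSet_biInter _ ht'), h𝓐.meas_biInter hs, h𝓑.meas_biInter ht,
      ← prod_mul_distrib]
    refine prod_congr rfl fun i hi => ?_
    rw [← hst i hi, (Indep_iff _ _ _).1 h _ _ (hs' i hi) (ht' i hi)]

theorem ProbabilityTheory.iIndep_comap_sup_comap {β γ : Type*} [mβ : MeasurableSpace β]
    [mγ : MeasurableSpace γ] {f : ι → Ω → β} {g : ι → Ω → γ} (hf : ∀ i, Measurable (f i))
    (hg : ∀ i, Measurable (g i)) (hf_indep : iIndepFun f μ) (hg_indep : iIndepFun g μ)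
    (hfg : IndepFun (fun ω i => f i ω) (fun ω i => g i ω) μ) :
    iIndep (fun i => mβ.comap (f i) ⊔ mγ.comap (g i)) μ :=
  iIndep.sup (fun i => (hf i).comap_le) (fun i => (hg i).comap_le) hf_indep hg_indep <|
    indep_of_indep_of_le hfg
      (iSup_le fun i => Measurable.comap_le
        ((measurable_pi_apply i).comp (comap_measurable fun ω i => f i ω)))
      (iSup_le fun i => Measurable.comap_le
        ((measurable_pi_apply i).comp (comap_measurable fun ω i => g i ω)))

end Independence

section ExponentialMoments

variable {Ω : Type*} {mΩ : MeasurableSpace Ω} {μ : Measure Ω}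

lemma ProbabilityTheory.IndepFun.lintegral_ofReal_exp_mul_sub {X Y : Ω → ℝ}
    (hXY : IndepFun X Y μ) (hX : Measurable X) (hY : Measurable Y) (θ : ℝ) :
    ∫⁻ ω, ENNReal.ofReal (exp (θ * (X ω - Y ω))) ∂μ =
      (∫⁻ ω, ENNReal.ofReal (exp (θ * X ω)) ∂μ) * ∫⁻ ω, ENNReal.ofReal (exp (-θ * Y ω)) ∂μ := by
  have hsplit : ∀ ω, ENNReal.ofReal (exp (θ * (X ω - Y ω))) =
      ENNReal.ofReal (exp (θ * X ω)) * ENNReal.ofReal (exp (-θ * Y ω)) := fun ω => by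
    rw [← ENNReal.ofReal_mul (exp_pos _).le, ← exp_add]
    ring_nf
  simp_rw [hsplit]
  exact lintegral_mul_eq_lintegral_mul_lintegral_of_indepFun'' (by fun_prop) (by fun_prop)
    (hXY.comp (φ := fun x => ENNReal.ofReal (exp (θ * x)))
      (ψ := fun x => ENNReal.ofReal (exp (-θ * x))) (by fun_prop) (by fun_prop))

lemma ProbabilityTheory.IdentDistrib.lintegral_ofReal_exp_mul {Ω' : Type*}
    {mΩ' : MeasurableSpace Ω'} {ν : Measure Ω'} {X : Ω → ℝ} {Y : Ω' → ℝ}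
    (h : IdentDistrib X Y μ ν) {θ : ℝ} (hY : Integrable (fun ω => exp (θ * Y ω)) ν) :
    ∫⁻ ω, ENNReal.ofReal (exp (θ * X ω)) ∂μ = ENNReal.ofReal (∫ ω, exp (θ * Y ω) ∂ν) :=
  (h.comp (by fun_prop : Measurable fun x => ENNReal.ofReal (exp (θ * x)))).lintegral_eq.trans
    (ofReal_integral_eq_lintegral_ofReal hY (ae_of_all _ fun _ => (exp_pos _).le)).symm

lemma integrable_exp_neg_mul_of_nonneg [IsFiniteMeasure μ] {X : Ω → ℝ} (hX : Measurable X)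
    (hX_nonneg : ∀ ω, 0 ≤ X ω) {θ : ℝ} (hθ : 0 ≤ θ) :
    Integrable (fun ω => exp (-θ * X ω)) μ :=
  Integrable.of_mem_Icc 0 1 (by fun_prop) (ae_of_all _ fun ω => ⟨(exp_pos _).le,
    exp_le_one_iff.2 (mul_nonpos_of_nonpos_of_nonneg (neg_nonpos.2 hθ) (hX_nonneg ω))⟩)

end ExponentialMoments

section UnionBound

variable {Ω ι : Type*} {mΩ : MeasurableSpace Ω} {μ : Measure Ω}

lemma measure_lt_sup'_le_sum {α : Type*} [LinearOrder α] (s : Finset ι) (hs : s.Nonempty)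
    (F : ι → Ω → α) (τ : α) :
    μ {ω | τ < s.sup' hs fun i => F i ω} ≤ ∑ i ∈ s, μ {ω | τ < F i ω} := by
  have hunion : {ω | τ < s.sup' hs fun i => F i ω} = ⋃ i ∈ s, {ω | τ < F i ω} := by
    ext ω
    simp [lt_sup'_iff]
  exact hunion ▸ measure_biUnion_finset_le s _

end UnionBound

section BackwardProduct

variable {Ω : Type*} {mΩ : MeasurableSpace Ω} {μ : Measure Ω} {U : ℕ → Ω → ℝ≥0∞}
  {c : ℝ≥0∞} {m n : ℕ}

def stayBelow (U : ℕ → Ω → ℝ≥0∞) (c : ℝ≥0∞) (m n : ℕ) : Set Ω :=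
  {ω | ∀ l ∈ Icc m n, ∏ ν ∈ Icc l n, U ν ω < c}

lemma stayBelow_eq_inter (hm : m ≤ n) :
    stayBelow U c m n = stayBelow U c (m + 1) n ∩ {ω | ∏ ν ∈ Icc m n, U ν ω < c} := by
  ext ω
  simp only [stayBelow, ← insert_Icc_add_one_left_eq_Icc hm, forall_mem_insert,
    Set.mem_inter_iff, Set.mem_ofPred_eq, and_comm]

lemma stayBelow_of_lt (h : n < m) : stayBelow U c m n = Set.univ := by
  simp [stayBelow, Icc_eq_empty_of_lt h]

lemma measurableSet_stayBelow {𝓖 : MeasurableSpace Ω}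
    (hU : ∀ ν, m ≤ ν → Measurable[𝓖] (U ν)) : MeasurableSet[𝓖] (stayBelow U c m n) := by
  simp only [stayBelow, Set.ofPred_forall]
  refine Finset.measurableSet_biInter _ fun l hl => measurableSet_lt ?_ measurable_const
  exact Finset.measurable_prod _ fun ν hν => hU ν ((mem_Icc.1 hl).1.trans (mem_Icc.1 hν).1)

lemma mul_measure_compl_stayBelow_add_setLIntegral_le (hU : ∀ ν, Measurable (U ν))
    (hm : m ≤ n) :
    c * μ (stayBelow U c m n)ᶜ + ∫⁻ ω in stayBelow U c m n, ∏ ν ∈ Icc m n, U ν ω ∂μ ≤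
      c * μ (stayBelow U c (m + 1) n)ᶜ +
        ∫⁻ ω in stayBelow U c (m + 1) n, ∏ ν ∈ Icc m n, U ν ω ∂μ := by
  rw [stayBelow_eq_inter hm]
  set B := stayBelow U c (m + 1) n
  set Y : Ω → ℝ≥0∞ := fun ω => ∏ ν ∈ Icc m n, U ν ω
  set S := {ω | Y ω < c}
  have hY : Measurable Y := Finset.measurable_prod _ fun ν _ => hU ν
  have hB : MeasurableSet B := measurableSet_stayBelow fun ν _ => hU ν
  have hS : MeasurableSet S := measurableSet_lt hY measurable_const
  have hcompl : (B ∩ S)ᶜ = Bᶜ ∪ B \ S := by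
    ext ω
    by_cases ω ∈ B <;> simp_all [S]
  have hfirst_passage : c * μ (B \ S) ≤ ∫⁻ ω in B \ S, Y ω ∂μ := by
    rw [← setLIntegral_const]
    exact setLIntegral_mono hY fun ω hω => not_lt.1 hω.2
  rw [hcompl, measure_union (disjoint_compl_left.mono_right Set.sdiff_subset) (hB.diff hS),
    ← lintegral_inter_add_sdiff Y B hS, mul_add]
  calc _ = c * μ Bᶜ + (∫⁻ ω in B ∩ S, Y ω ∂μ + c * μ (B \ S)) := by ring
    _ ≤ _ := by gcongr

variable {𝓕 : ℕ → MeasurableSpace Ω}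

lemma setLIntegral_stayBelow_prod_Icc_eq_mul (h𝓕_le : ∀ ν, 𝓕 ν ≤ mΩ) (h𝓕 : iIndep 𝓕 μ)
    (hU : ∀ ν, Measurable[𝓕 ν] (U ν)) (hm : m ≤ n) :
    ∫⁻ ω in stayBelow U c (m + 1) n, ∏ ν ∈ Icc m n, U ν ω ∂μ =
      (∫⁻ ω in stayBelow U c (m + 1) n, ∏ ν ∈ Icc (m + 1) n, U ν ω ∂μ) * ∫⁻ ω, U m ω ∂μ := by
  have hfuture_le : ⨆ ν ∈ Set.Ioi m, 𝓕 ν ≤ mΩ := iSup₂_le fun ν _ => h𝓕_le ν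
  have hU_future : ∀ ν, m + 1 ≤ ν → Measurable[⨆ ν ∈ Set.Ioi m, 𝓕 ν] (U ν) := fun ν hν =>
    (hU ν).mono (le_iSup₂ (f := fun ν (_ : ν ∈ Set.Ioi m) => 𝓕 ν) ν hν) le_rfl
  have hB : MeasurableSet[⨆ ν ∈ Set.Ioi m, 𝓕 ν] (stayBelow U c (m + 1) n) :=
    measurableSet_stayBelow hU_future
  have hindep : Indep (⨆ ν ∈ Set.Ioi m, 𝓕 ν) (𝓕 m) μ :=
    indep_of_indep_of_le_right
      (indep_iSup_of_disjoint h𝓕_le h𝓕 (Set.disjoint_singleton_right.2 (lt_irrefl m)))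
      (le_iSup₂ (f := fun ν (_ : ν ∈ ({m} : Set ℕ)) => 𝓕 ν) m rfl)
  simp_rw [← lintegral_indicator (hfuture_le _ hB), prod_Icc_eq_mul_prod_Icc_add_one _ hm,
    mul_comm (U m _), Set.indicator_mul_left]
  exact lintegral_mul_eq_lintegral_mul_lintegral_of_independent_measurableSpace hfuture_le
    (h𝓕_le m) hindep
    ((Finset.measurable_prod _ fun ν hν => hU_future ν (mem_Icc.1 hν).1).indicator hB) (hU m)

variable [IsProbabilityMeasure μ]

lemma mul_measure_compl_stayBelow_add_setLIntegral_le_lintegral (h𝓕_le : ∀ ν, 𝓕 ν ≤ mΩ)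
    (h𝓕 : iIndep 𝓕 μ) (hU : ∀ ν, Measurable[𝓕 ν] (U ν)) {l : ℕ}
    (hl : ∀ ν ∈ Ico l n, ∫⁻ ω, U ν ω ∂μ ≤ 1) (hln : l ≤ n) :
    c * μ (stayBelow U c l n)ᶜ + ∫⁻ ω in stayBelow U c l n, ∏ ν ∈ Icc l n, U ν ω ∂μ ≤
      ∫⁻ ω, U n ω ∂μ := by
  have hstep : ∀ m ≤ n, c * μ (stayBelow U c m n)ᶜ +
      ∫⁻ ω in stayBelow U c m n, ∏ ν ∈ Icc m n, U ν ω ∂μ ≤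
      c * μ (stayBelow U c (m + 1) n)ᶜ +
        (∫⁻ ω in stayBelow U c (m + 1) n, ∏ ν ∈ Icc (m + 1) n, U ν ω ∂μ) * ∫⁻ ω, U m ω ∂μ :=
    fun m hm => (mul_measure_compl_stayBelow_add_setLIntegral_le
      (fun ν => (hU ν).mono (h𝓕_le ν) le_rfl) hm).trans_eq
      (by rw [setLIntegral_stayBelow_prod_Icc_eq_mul h𝓕_le h𝓕 hU hm])
  refine Nat.decreasingInduction' (P := fun m => c * μ (stayBelow U c m n)ᶜ +
      ∫⁻ ω in stayBelow U c m n, ∏ ν ∈ Icc m n, U ν ω ∂μ ≤ ∫⁻ ω, U n ω ∂μ)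
    (fun m hmn hlm ih => (hstep m hmn.le).trans (le_trans ?_ ih)) hln ?_
  · gcongr
    exact mul_le_of_le_one_right' (hl m (mem_Ico.2 ⟨hlm, hmn⟩))
  · simpa [stayBelow_of_lt (Nat.lt_succ_self n), Icc_eq_empty_of_lt (Nat.lt_succ_self n)]
      using hstep n le_rfl

theorem mul_measure_exists_le_prod_Icc_le_lintegral (h𝓕_le : ∀ ν, 𝓕 ν ≤ mΩ)
    (h𝓕 : iIndep 𝓕 μ) (hU : ∀ ν, Measurable[𝓕 ν] (U ν)) {l : ℕ}
    (hl : ∀ ν ∈ Ico l n, ∫⁻ ω, U ν ω ∂μ ≤ 1) (c : ℝ≥0∞) :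
    c * μ {ω | ∃ m ∈ Icc l n, c ≤ ∏ ν ∈ Icc m n, U ν ω} ≤ ∫⁻ ω, U n ω ∂μ := by
  rcases le_or_gt l n with hln | hnl
  · have hset : {ω | ∃ m ∈ Icc l n, c ≤ ∏ ν ∈ Icc m n, U ν ω} = (stayBelow U c l n)ᶜ := by
      ext ω
      simp [stayBelow, and_assoc]
    rw [hset]
    exact le_self_add.trans
      (mul_measure_compl_stayBelow_add_setLIntegral_le_lintegral h𝓕_le h𝓕 hU hl hln)
  · simp [Icc_eq_empty_of_lt hnl]

end BackwardProduct

section Queue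

variable {Ω : Type*} {mΩ : MeasurableSpace Ω} {μ : Measure Ω} [IsProbabilityMeasure μ]

/-- The `if` drops `a n`: the inter-arrival time after job `n` does not enter its sojourn time. -/
lemma prod_Icc_ofReal_exp_eq_ofReal_exp_sojourn (q a : ℕ → ℝ) (θ : ℝ) {m n : ℕ} (hm : 1 ≤ m) :
    ∏ ν ∈ Icc m n, ENNReal.ofReal (exp (θ * (q ν - if ν < n then a ν else 0))) =
      ENNReal.ofReal (exp (θ * (∑ ν ∈ Icc m n, q ν - ∑ ν ∈ Icc m (n - 1), a ν))) := by
  have hfilter : (Icc m n).filter (· < n) = Icc m (n - 1) := by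
    ext ν
    simp only [mem_filter, mem_Icc]
    omega
  rw [← ENNReal.ofReal_prod_of_nonneg fun _ _ => (exp_pos _).le, ← exp_sum, ← mul_sum,
    sum_sub_distrib, ← sum_filter, hfilter]

theorem measure_sojourn_gt_le (q a : ℕ → Ω → ℝ) (hq : ∀ ν, Measurable (q ν))
    (ha : ∀ ν, Measurable (a ν)) (hq_indep : iIndepFun q μ) (ha_indep : iIndepFun a μ)
    (hqa : IndepFun (fun ω ν => q ν ω) (fun ω ν => a ν ω) μ) {θ : ℝ} (hθ : 0 ≤ θ) {n : ℕ}
    (hn : 1 ≤ n) (hstab : ∀ ν ∈ Ico 1 n, (∫⁻ ω, ENNReal.ofReal (exp (θ * q ν ω)) ∂μ) *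
      ∫⁻ ω, ENNReal.ofReal (exp (-θ * a ν ω)) ∂μ ≤ 1) (τ : ℝ) :
    μ {ω | τ < (Icc 1 n).sup' (nonempty_Icc.2 hn)
        fun m => ∑ ν ∈ Icc m n, q ν ω - ∑ ν ∈ Icc m (n - 1), a ν ω} ≤
      (∫⁻ ω, ENNReal.ofReal (exp (θ * q n ω)) ∂μ) * ENNReal.ofReal (exp (-θ * τ)) := by
  set U : ℕ → Ω → ℝ≥0∞ :=
    fun ν ω => ENNReal.ofReal (exp (θ * (q ν ω - if ν < n then a ν ω else 0)))
  have hU : ∀ ν, Measurable[Real.measurableSpace.comap (q ν) ⊔ Real.measurableSpace.comap (a ν)]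
      (U ν) := fun ν => by
    refine ENNReal.measurable_ofReal.comp (measurable_exp.comp (measurable_const.mul
      ((Measurable.of_comap_le le_sup_left).sub ?_)))
    split_ifs
    exacts [Measurable.of_comap_le le_sup_right, measurable_const]
  have hU_le : ∀ ν ∈ Ico 1 n, ∫⁻ ω, U ν ω ∂μ ≤ 1 := fun ν hν => by
    have hind : IndepFun (q ν) (a ν) μ := hqa.comp (measurable_pi_apply ν) (measurable_pi_apply ν)
    simp only [U, (mem_Ico.1 hν).2, if_true]
    rw [hind.lintegral_ofReal_exp_mul_sub (hq ν) (ha ν)]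
    exact hstab ν hν
  have hsub : {ω | τ < (Icc 1 n).sup' (nonempty_Icc.2 hn)
      fun m => ∑ ν ∈ Icc m n, q ν ω - ∑ ν ∈ Icc m (n - 1), a ν ω} ⊆
      {ω | ∃ m ∈ Icc 1 n, ENNReal.ofReal (exp (θ * τ)) ≤ ∏ ν ∈ Icc m n, U ν ω} := by
    intro ω hω
    obtain ⟨m, hm, hτ⟩ := (lt_sup'_iff _).1 (show τ < _ from hω)
    refine ⟨m, hm, ?_⟩
    rw [prod_Icc_ofReal_exp_eq_ofReal_exp_sojourn _ _ θ (mem_Icc.1 hm).1]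
    exact ENNReal.ofReal_le_ofReal (exp_le_exp.2 (mul_le_mul_of_nonneg_left hτ.le hθ))
  have hVille := mul_measure_exists_le_prod_Icc_le_lintegral
    (fun ν => sup_le (hq ν).comap_le (ha ν).comap_le)
    (iIndep_comap_sup_comap hq ha hq_indep ha_indep hqa) hU hU_le (ENNReal.ofReal (exp (θ * τ)))
  have hUn : ∫⁻ ω, U n ω ∂μ = ∫⁻ ω, ENNReal.ofReal (exp (θ * q n ω)) ∂μ := by simp [U]
  have hexp : ENNReal.ofReal (exp (-θ * τ)) * ENNReal.ofReal (exp (θ * τ)) = 1 := by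
    rw [← ENNReal.ofReal_mul (exp_pos _).le, ← exp_add]
    simp
  calc _ ≤ ENNReal.ofReal (exp (-θ * τ)) * (ENNReal.ofReal (exp (θ * τ)) *
        μ {ω | ∃ m ∈ Icc 1 n, ENNReal.ofReal (exp (θ * τ)) ≤ ∏ ν ∈ Icc m n, U ν ω}) := by
        rw [← mul_assoc, hexp, one_mul]
        exact measure_mono hsub
    _ ≤ _ := by
        rw [mul_comm, ← hUn]
        gcongr

end Queue

theorem forkjoin_gigi_sojourn_bound_general
    {Ω : Type*} [MeasurableSpace Ω] (μ : Measure Ω) [IsProbabilityMeasure μ]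
    (k : ℕ) (hk : 1 ≤ k)
    (a : ℕ → Ω → ℝ) (Q : ℕ → ℕ → Ω → ℝ)
    (hameas : ∀ ν, Measurable (a ν)) (hQmeas : ∀ i ν, Measurable (Q i ν))
    (hanonneg : ∀ ν ω, 0 ≤ a ν ω)
    (haiid : iIndepFun a μ)
    (haid : ∀ ν, 1 ≤ ν → IdentDistrib (a ν) (a 1) μ μ)
    (hQiid : ∀ i, 1 ≤ i → i ≤ k → iIndepFun (Q i) μ)
    (hQid : ∀ i, 1 ≤ i → i ≤ k → ∀ ν, 1 ≤ ν → IdentDistrib (Q i ν) (Q 1 1) μ μ)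
    (hindep : IndepFun (fun ω (ν : ℕ) => a ν ω) (fun ω (p : ℕ × ℕ) => Q p.1 p.2 ω) μ)
    (θ : ℝ) (hθ : 0 < θ)
    (hint : Integrable (fun ω => exp (θ * Q 1 1 ω)) μ)
    (hstab : (∫ ω, exp (θ * Q 1 1 ω) ∂μ) * (∫ ω, exp (-θ * a 1 ω) ∂μ) ≤ 1) :
    ∀ n : ℕ, ∀ hn : 1 ≤ n, ∀ τ : ℝ, 0 ≤ τ →
      μ {ω | τ < (Finset.Icc 1 k).sup' (Finset.nonempty_Icc.mpr hk)
          (fun i => (Finset.Icc 1 n).sup' (Finset.nonempty_Icc.mpr hn)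
            (fun m => (∑ ν ∈ Finset.Icc m n, Q i ν ω) - ∑ ν ∈ Finset.Icc m (n - 1), a ν ω))}
        ≤ ENNReal.ofReal ((k : ℝ) * (∫ ω, exp (θ * Q 1 1 ω) ∂μ) * exp (-θ * τ)) := by
  intro n hn τ _
  set CQ := ∫ ω, exp (θ * Q 1 1 ω) ∂μ
  have hQ_mgf : ∀ i ∈ Icc 1 k, ∀ ν, 1 ≤ ν →
      ∫⁻ ω, ENNReal.ofReal (exp (θ * Q i ν ω)) ∂μ = ENNReal.ofReal CQ := fun i hi ν hν =>
    (hQid i (mem_Icc.1 hi).1 (mem_Icc.1 hi).2 ν hν).lintegral_ofReal_exp_mul hint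
  have ha_mgf : ∀ ν, 1 ≤ ν → ∫⁻ ω, ENNReal.ofReal (exp (-θ * a ν ω)) ∂μ =
      ENNReal.ofReal (∫ ω, exp (-θ * a 1 ω) ∂μ) := fun ν hν =>
    (haid ν hν).lintegral_ofReal_exp_mul
      (integrable_exp_neg_mul_of_nonneg (hameas 1) (hanonneg 1) hθ.le)
  calc _ ≤ ∑ i ∈ Icc 1 k, ENNReal.ofReal CQ * ENNReal.ofReal (exp (-θ * τ)) := by
        refine (measure_lt_sup'_le_sum _ _ _ τ).trans (sum_le_sum fun i hi => ?_)
        rw [← hQ_mgf i hi n hn]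
        refine measure_sojourn_gt_le (Q i) a (hQmeas i) hameas
          (hQiid i (mem_Icc.1 hi).1 (mem_Icc.1 hi).2) haiid
          (hindep.symm.comp (measurable_pi_lambda (fun q ν => q (i, ν)) fun ν =>
            measurable_pi_apply _) measurable_id) hθ.le hn (fun ν hν => ?_) τ
        rw [hQ_mgf i hi ν (mem_Ico.1 hν).1, ha_mgf ν (mem_Ico.1 hν).1,
          ← ENNReal.ofReal_mul (integral_nonneg fun _ => (exp_pos _).le)]
        exact ENNReal.ofReal_le_one.2 hstab
    _ = _ := by
        rw [sum_const, Nat.card_Icc, add_tsub_cancel_right, nsmul_eq_mul, mul_assoc,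
          ← ENNReal.ofReal_mul (integral_nonneg fun _ => (exp_pos _).le),
          ← ENNReal.ofReal_natCast, ← ENNReal.ofReal_mul (Nat.cast_nonneg k)]

/-- **Sojourn time bound for a GI|GI fork-join system with `k` parallel servers.**
The inter-arrival times `a` are i.i.d.; for each server `i ∈ [1,k]` the task service times
`(Q i ν)_ν` are i.i.d. with the same marginal distribution as `Q 1 1` (no independence across
servers is assumed), and all task service times are independent of the arrivals.  For `θ > 0`
with `E[exp (θ Q 1 1)] · E[exp (-θ a 1)] ≤ 1`, the fork-join sojourn time
`T n = max_{i ∈ [1,k]} max_{m ∈ [1,n]} (∑_{ν=m}^{n} Q i ν - ∑_{ν=m}^{n-1} a ν)` satisfies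
`P[T n > τ] ≤ k · E[exp (θ Q 1 1)] · exp (-θ τ)`. -/
theorem forkjoin_gigi_sojourn_bound
    {Ω : Type*} [MeasurableSpace Ω] (μ : Measure Ω) [IsProbabilityMeasure μ]
    (k : ℕ) (hk : 1 ≤ k)
    (a : ℕ → Ω → ℝ) (Q : ℕ → ℕ → Ω → ℝ)
    (hameas : ∀ ν, Measurable (a ν)) (hQmeas : ∀ i ν, Measurable (Q i ν))
    (hanonneg : ∀ ν ω, 0 ≤ a ν ω) (hQnonneg : ∀ i ν ω, 0 ≤ Q i ν ω)
    (haiid : iIndepFun a μ)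
    (haid : ∀ ν, 1 ≤ ν → IdentDistrib (a ν) (a 1) μ μ)
    (hQiid : ∀ i, 1 ≤ i → i ≤ k → iIndepFun (Q i) μ)
    (hQid : ∀ i, 1 ≤ i → i ≤ k → ∀ ν, 1 ≤ ν → IdentDistrib (Q i ν) (Q 1 1) μ μ)
    (hindep : IndepFun (fun ω (ν : ℕ) => a ν ω) (fun ω (p : ℕ × ℕ) => Q p.1 p.2 ω) μ)
    (θ : ℝ) (hθ : 0 < θ)
    (hint : Integrable (fun ω => exp (θ * Q 1 1 ω)) μ)
    (hstab : (∫ ω, exp (θ * Q 1 1 ω) ∂μ) * (∫ ω, exp (-θ * a 1 ω) ∂μ) ≤ 1) :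
    ∀ n : ℕ, ∀ hn : 1 ≤ n, ∀ τ : ℝ, 0 ≤ τ →
      μ {ω | τ < (Finset.Icc 1 k).sup' (Finset.nonempty_Icc.mpr hk)
          (fun i => (Finset.Icc 1 n).sup' (Finset.nonempty_Icc.mpr hn)
            (fun m => (∑ ν ∈ Finset.Icc m n, Q i ν ω) - ∑ ν ∈ Finset.Icc m (n - 1), a ν ω))}
        ≤ ENNReal.ofReal ((k : ℝ) * (∫ ω, exp (θ * Q 1 1 ω) ∂μ) * exp (-θ * τ)) :=
  forkjoin_gigi_sojourn_bound_general μ k hk a Q hameas hQmeas hanonneg haiid haid hQiid hQid hindep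
    θ hθ hint hstab
end

section
/- Consider a multi-server system with k parallel work-conserving FIFO servers, deterministic (round-robin) thinning, and resequencing. The external arrivals have i.i.d. nonnegative inter-arrival times (a(ν))_{ν ≥ 1}, A(n) = Σ_{ν=1}^{n−1} a(ν); server i ∈ [1,k] receives the jobs X_i(m) = k(m−1)+i with arrivals A_i(m) = A(X_i(m)) and i.i.d. nonnegative job service times (L_i(m))_{m ≥ 1}, all service times independent of the arrivals and identically distributed as L(1) across servers; server i is an exact max-plus server with departures D_i(m) = max_{μ ∈ [1,m]} { A_i(μ) + Σ_{ν=μ}^{m} L_i(ν) }. The resequenced departure of job n is D(n) = max_{i ∈ [1,k]} D_i(Y_i(n)) with Y_i(n) = ⌈(n−i+1)/k⌉ and D_i(0) = 0, and the sojourn time is T(n) = D(n) − A(n). Fix θ > 0 such that E[exp(θ L(1))] · (E[exp(−θ a(1))])^k ≤ 1. Then for all n ≥ 1 and τ ≥ 0, P[T(n) > τ] ≤ k · E[exp(θ L(1))] · exp(−θτ). -/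
open MeasureTheory ProbabilityTheory Real

/-- Cumulative arrival process: `A n = ∑_{ν=1}^{n-1} a ν`. -/
noncomputable def cumArr {Ω : Type*} (a : ℕ → Ω → ℝ) (n : ℕ) (ω : Ω) : ℝ :=
  ∑ ν ∈ Finset.Icc 1 (n - 1), a ν ω

/-- Departure time of the `m`-th job of server `i` under round-robin thinning
(`X_i(m) = k(m-1)+i`, `A_i(m) = A (X_i(m))`), the server being an exact max-plus server:
`D_i m = max_{μ' ∈ [1,m]} (A_i μ' + ∑_{ν=μ'}^{m} L i ν)`; since all terms are nonnegative,
the real-valued `⨆` (whose empty supremum is `0`) realizes this together with the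
convention `D_i 0 = 0`. -/
noncomputable def thinServerDep {Ω : Type*} (k i : ℕ) (a : ℕ → Ω → ℝ)
    (L : ℕ → ℕ → Ω → ℝ) (m : ℕ) (ω : Ω) : ℝ :=
  ⨆ μ' ∈ Finset.Icc 1 m, (cumArr a (k * (μ' - 1) + i) ω + ∑ ν ∈ Finset.Icc μ' m, L i ν ω)

/-- Resequenced departure time: `D n = max_{i ∈ [1,k]} D_i (Y_i n)` with
`Y_i n = ⌈(n-i+1)/k⌉ = (n+k-i)/k` (ℕ-division) and `D_i 0 = 0`. -/
noncomputable def reseqDep {Ω : Type*} (k : ℕ) (a : ℕ → Ω → ℝ)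
    (L : ℕ → ℕ → Ω → ℝ) (n : ℕ) (ω : Ω) : ℝ :=
  ⨆ i ∈ Finset.Icc 1 k, thinServerDep k i a L ((n + k - i) / k) ω

/-!
Server `i` is a FIFO queue fed every `k`-th job, so the excess of its departure time over
`A(n)` is bounded by the Lindley waiting-time process `W (m+1) = max 0 (W m + U m)`, whose
increment `U m` is the service time of the `(m+1)`-st job of the server minus the `k`
inter-arrival times up to its next job (minus those up to `n`, for the last job), and is
independent of `W m`. Integrating the tail of `W m` against the law of `U m`, the bound
`P[W m > s] ≤ exp (-θ s)` propagates along the recursion because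
`E[exp (θ U)] = E[exp (θ L)] E[exp (-θ a)]^k ≤ 1`; the last, truncated step costs the factor
`E[exp (θ L)]`, and a union bound over the `k` servers costs the factor `k`.
-/

open Finset

noncomputable def lindley (u : ℕ → ℝ) : ℕ → ℝ
  | 0 => 0
  | m + 1 => max 0 (u m + lindley u m)

lemma lindley_nonneg (u : ℕ → ℝ) : ∀ m, 0 ≤ lindley u m
  | 0 => le_rfl
  | _ + 1 => le_max_left _ _

lemma sum_Ico_le_lindley (u : ℕ → ℝ) {p m : ℕ} (hpm : p ≤ m) :
    ∑ j ∈ Ico p m, u j ≤ lindley u m := by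
  induction m, hpm using Nat.le_induction with
  | base => simpa using lindley_nonneg u p
  | succ m hpm ih =>
    rw [sum_Ico_succ_top hpm]
    exact (by linarith : _ ≤ u m + lindley u m).trans (le_max_right _ _)

lemma lt_lindley_succ_iff {u : ℕ → ℝ} {m : ℕ} {s : ℝ} (hs : 0 ≤ s) :
    s < lindley u (m + 1) ↔ s < u m + lindley u m := by
  simp [lindley, hs.not_gt]

lemma measurable_lindley {Ω : Type*} {mΩ : MeasurableSpace Ω} {V : ℕ → Ω → ℝ} {n : ℕ}
    (hV : ∀ j < n, Measurable (V j)) : Measurable fun ω => lindley (V · ω) n := by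
  induction n with
  | zero => exact measurable_const
  | succ n ih =>
    exact measurable_const.max ((hV n n.lt_succ_self).add (ih fun j hj => hV j (by omega)))

section Tail

variable {Ω : Type*} [MeasurableSpace Ω] {μ : Measure Ω} [IsProbabilityMeasure μ] {θ : ℝ}

lemma measure_le_ofReal_exp_of_nonpos (hθ : 0 ≤ θ) {s : ℝ} (hs : s ≤ 0) (S : Set Ω) :
    μ S ≤ ENNReal.ofReal (exp (-θ * s)) := by
  refine prob_le_one.trans ?_
  rw [← ENNReal.ofReal_one]
  exact ENNReal.ofReal_le_ofReal (one_le_exp (mul_nonneg_of_nonpos_of_nonpos (by linarith) hs))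

lemma lintegral_ofReal_exp_neg_mul_le_one (hθ : 0 ≤ θ) {X : Ω → ℝ} (hX : ∀ ω, 0 ≤ X ω) :
    ∫⁻ ω, ENNReal.ofReal (exp (-θ * X ω)) ∂μ ≤ 1 := by
  refine (lintegral_mono fun ω => ENNReal.ofReal_le_one.2 (exp_le_one_iff.2 ?_)).trans_eq
    (by simp)
  nlinarith [hX ω]

lemma integrable_exp_neg_mul (hθ : 0 ≤ θ) {X : Ω → ℝ} (hXm : Measurable X) (hX : ∀ ω, 0 ≤ X ω) :
    Integrable (fun ω => exp (-θ * X ω)) μ :=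
  .of_bound (by fun_prop) 1 (ae_of_all _ fun ω => by
    rw [norm_of_nonneg (exp_pos _).le, exp_le_one_iff]
    nlinarith [hX ω])

lemma measure_lt_add_le_of_indepFun {X Y : Ω → ℝ} (hX : Measurable X) (hY : Measurable Y)
    (hXY : IndepFun X Y μ) (hY_tail : ∀ t, μ {ω | t < Y ω} ≤ ENNReal.ofReal (exp (-θ * t)))
    (s : ℝ) :
    μ {ω | s < X ω + Y ω} ≤
      ENNReal.ofReal (exp (-θ * s)) * ∫⁻ ω, ENNReal.ofReal (exp (θ * X ω)) ∂μ := by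
  have hS : MeasurableSet {p : ℝ × ℝ | s < p.1 + p.2} :=
    measurableSet_lt measurable_const (measurable_fst.add measurable_snd)
  have hexp : Measurable fun x : ℝ => ENNReal.ofReal (exp (θ * x)) := by fun_prop
  have hsection : ∀ x, μ.map Y (Prod.mk x ⁻¹' {p : ℝ × ℝ | s < p.1 + p.2}) ≤
      ENNReal.ofReal (exp (-θ * s)) * ENNReal.ofReal (exp (θ * x)) := by
    intro x
    rw [Measure.map_apply hY (measurable_prodMk_left hS), ← ENNReal.ofReal_mul (exp_pos _).le,
      ← exp_add]
    convert hY_tail (s - x) using 3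
    · ext ω
      simp only [Set.mem_preimage, Set.mem_ofPred_eq]
      constructor <;> intro h <;> linarith
    · ring
  calc μ {ω | s < X ω + Y ω}
      = (μ.map X).prod (μ.map Y) {p : ℝ × ℝ | s < p.1 + p.2} := by
        rw [← (indepFun_iff_map_prod_eq_prod_map_map hX.aemeasurable hY.aemeasurable).1 hXY,
          Measure.map_apply (hX.prodMk hY) hS]
        rfl
    _ ≤ ∫⁻ x, ENNReal.ofReal (exp (-θ * s)) * ENNReal.ofReal (exp (θ * x)) ∂μ.map X := by
        rw [Measure.prod_apply hS]
        exact lintegral_mono hsection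
    _ = _ := by rw [lintegral_const_mul _ hexp, lintegral_map hexp hX]

theorem measure_lt_lindley_le (hθ : 0 ≤ θ) {V : ℕ → Ω → ℝ} {m : ℕ} (hV : ∀ j, Measurable (V j))
    (hind : ∀ j < m, IndepFun (V j) (fun ω => lindley (V · ω) j) μ)
    (hmgf : ∀ j < m, ∫⁻ ω, ENNReal.ofReal (exp (θ * V j ω)) ∂μ ≤ 1) (s : ℝ) :
    μ {ω | s < lindley (V · ω) m} ≤ ENNReal.ofReal (exp (-θ * s)) := by
  induction m generalizing s with
  | zero =>
    rcases le_or_gt s 0 with hs | hs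
    · exact measure_le_ofReal_exp_of_nonpos hθ hs _
    · simp [lindley, hs.not_gt]
  | succ m ih =>
    rcases le_or_gt s 0 with hs | hs
    · exact measure_le_ofReal_exp_of_nonpos hθ hs _
    calc μ {ω | s < lindley (V · ω) (m + 1)}
        = μ {ω | s < V m ω + lindley (V · ω) m} := by simp_rw [lt_lindley_succ_iff hs.le]
      _ ≤ ENNReal.ofReal (exp (-θ * s)) * ∫⁻ ω, ENNReal.ofReal (exp (θ * V m ω)) ∂μ :=
        measure_lt_add_le_of_indepFun (hV m) (measurable_lindley fun j _ => hV j)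
          (hind m m.lt_succ_self)
          (ih (fun j hj => hind j (by omega)) (fun j hj => hmgf j (by omega))) s
      _ ≤ ENNReal.ofReal (exp (-θ * s)) := mul_le_of_le_one_right' (hmgf m m.lt_succ_self)

end Tail

lemma lintegral_exp_mul_sub_sum {Ω ι : Type*} [MeasurableSpace Ω] {μ : Measure Ω} {X : Ω → ℝ}
    {a : ι → Ω → ℝ} (hX : Measurable X) (ha : ∀ ν, Measurable (a ν))
    (hXa : IndepFun X (fun ω ν => a ν ω) μ) (haiid : iIndepFun a μ) (θ : ℝ) (B : Finset ι) :
    ∫⁻ ω, ENNReal.ofReal (exp (θ * (X ω - ∑ ν ∈ B, a ν ω))) ∂μ =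
      (∫⁻ ω, ENNReal.ofReal (exp (θ * X ω)) ∂μ) *
        ∏ ν ∈ B, ∫⁻ ω, ENNReal.ofReal (exp (-θ * a ν ω)) ∂μ := by
  have hsplit : ∀ ω, ENNReal.ofReal (exp (θ * (X ω - ∑ ν ∈ B, a ν ω))) =
      ENNReal.ofReal (exp (θ * X ω)) * ∏ ν ∈ B, ENNReal.ofReal (exp (-θ * a ν ω)) := by
    intro ω
    rw [← ENNReal.ofReal_prod_of_nonneg fun _ _ => (exp_pos _).le,
      ← ENNReal.ofReal_mul (exp_pos _).le, ← exp_sum, ← exp_add, mul_sub, mul_sum]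
    simp only [neg_mul, sum_neg_distrib, sub_eq_add_neg]
  have hind : IndepFun (fun ω => ENNReal.ofReal (exp (θ * X ω)))
      (fun ω => ∏ ν ∈ B, ENNReal.ofReal (exp (-θ * a ν ω))) μ :=
    hXa.comp (φ := fun x => ENNReal.ofReal (exp (θ * x)))
      (ψ := fun y : ι → ℝ => ∏ ν ∈ B, ENNReal.ofReal (exp (-θ * y ν))) (by fun_prop)
      (Finset.measurable_prod _ fun ν _ => by fun_prop)
  simp_rw [hsplit]
  rw [lintegral_mul_eq_lintegral_mul_lintegral_of_indepFun'' (by fun_prop)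
      (Finset.aemeasurable_fun_prod _ fun ν _ => by fun_prop) hind,
    lintegral_prod_eq_prod_lintegral_of_indepFun B (fun ν ω => ENNReal.ofReal (exp (-θ * a ν ω)))
      (haiid.comp (fun _ x => ENNReal.ofReal (exp (-θ * x))) fun _ => by fun_prop)
      fun ν => by fun_prop]

lemma iIndepFun.sumElim {Ω ι κ β : Type*} [MeasurableSpace Ω] [MeasurableSpace β]
    {μ : Measure Ω} {f : ι → Ω → β} {g : κ → Ω → β}
    (hf : iIndepFun f μ) (hg : iIndepFun g μ)
    (hfg : IndepFun (fun ω x => f x ω) (fun ω y => g y ω) μ) :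
    iIndepFun (Sum.elim f g) μ := by
  classical
  rw [iIndepFun_iff_measure_inter_preimage_eq_mul]
  intro S sets hsets
  set Cf : Set (ι → β) := ⋂ x ∈ S.toLeft, (fun h => h x) ⁻¹' sets (Sum.inl x)
  set Cg : Set (κ → β) := ⋂ y ∈ S.toRight, (fun h => h y) ⁻¹' sets (Sum.inr y)
  have hCf : MeasurableSet Cf := .biInter (S.toLeft : Set ι).to_countable
    fun x hx => measurable_pi_apply x (hsets _ (mem_toLeft.1 hx))
  have hCg : MeasurableSet Cg := .biInter (S.toRight : Set κ).to_countable
    fun y hy => measurable_pi_apply y (hsets _ (mem_toRight.1 hy))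
  have hinter : ⋂ j ∈ S, Sum.elim f g j ⁻¹' sets j =
      (fun ω x => f x ω) ⁻¹' Cf ∩ (fun ω y => g y ω) ⁻¹' Cg := by
    ext ω
    simp only [Cf, Cg, Set.mem_iInter, Set.mem_inter_iff, Set.mem_preimage, mem_toLeft,
      mem_toRight]
    exact ⟨fun h => ⟨fun x hx => h _ hx, fun y hy => h _ hy⟩,
      fun h => by rintro (x | y) hj; exacts [h.1 x hj, h.2 y hj]⟩
  have hpre_f : (fun ω x => f x ω) ⁻¹' Cf = ⋂ x ∈ S.toLeft, f x ⁻¹' sets (Sum.inl x) := by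
    ext ω; simp [Cf]
  have hpre_g : (fun ω y => g y ω) ⁻¹' Cg = ⋂ y ∈ S.toRight, g y ⁻¹' sets (Sum.inr y) := by
    ext ω; simp [Cg]
  rw [hinter, hfg.measure_inter_preimage_eq_mul _ _ hCf hCg, hpre_f, hpre_g,
    hf.measure_inter_preimage_eq_mul _ fun x hx => hsets _ (mem_toLeft.1 hx),
    hg.measure_inter_preimage_eq_mul _ fun y hy => hsets _ (mem_toRight.1 hy)]
  conv_rhs => rw [← toLeft_disjSum_toRight (u := S), prod_disjSum]
  rfl

lemma sum_Ico_sum_Ico_of_monotone {M : Type*} [AddCommMonoid M] {b : ℕ → ℕ} (hb : Monotone b)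
    (f : ℕ → M) {p q : ℕ} (hpq : p ≤ q) :
    ∑ j ∈ Ico p q, ∑ ν ∈ Ico (b j) (b (j + 1)), f ν = ∑ ν ∈ Ico (b p) (b q), f ν := by
  induction q, hpq using Nat.le_induction with
  | base => simp
  | succ q hpq ih =>
    rw [sum_Ico_succ_top hpq, ih, sum_Ico_consecutive _ (hb hpq) (hb q.le_succ)]

section BlockIncrements

variable {Ω : Type*} (b : ℕ → ℕ) (a s : ℕ → Ω → ℝ)

/-- Lindley increment of a FIFO server whose `(j+1)`-st job, of service time `s (j+1)`, is
followed by its next job after the inter-arrival times `a ν`, `b j ≤ ν < b (j+1)`. -/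
noncomputable def blockIncr (j : ℕ) (ω : Ω) : ℝ :=
  s (j + 1) ω - ∑ ν ∈ Ico (b j) (b (j + 1)), a ν ω

variable {b a s}

lemma sum_Ico_blockIncr (hb : Monotone b) {p q : ℕ} (hpq : p ≤ q) (ω : Ω) :
    ∑ j ∈ Ico p q, blockIncr b a s j ω =
      ∑ m ∈ Icc (p + 1) q, s m ω - ∑ ν ∈ Ico (b p) (b q), a ν ω := by
  simp only [blockIncr, sum_sub_distrib, sum_Ico_sum_Ico_of_monotone hb _ hpq,
    ← Ico_add_one_right_eq_Icc, sum_Ico_add' (fun m => s m ω)]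

lemma lintegral_exp_blockIncr [MeasurableSpace Ω] {μ : Measure Ω} {A S : Ω → ℝ}
    (ha : ∀ ν, Measurable (a ν)) (hs : ∀ m, Measurable (s m)) (haiid : iIndepFun a μ)
    (has : IndepFun (fun ω ν => a ν ω) (fun ω m => s m ω) μ) (θ : ℝ) (j : ℕ)
    (ha_id : ∀ ν ∈ Ico (b j) (b (j + 1)), IdentDistrib (a ν) A μ μ)
    (hs_id : IdentDistrib (s (j + 1)) S μ μ) :
    ∫⁻ ω, ENNReal.ofReal (exp (θ * blockIncr b a s j ω)) ∂μ =
      (∫⁻ ω, ENNReal.ofReal (exp (θ * S ω)) ∂μ) *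
        (∫⁻ ω, ENNReal.ofReal (exp (-θ * A ω)) ∂μ) ^ #(Ico (b j) (b (j + 1))) := by
  have hA (ν) (hν : ν ∈ Ico (b j) (b (j + 1))) : ∫⁻ ω, ENNReal.ofReal (exp (-θ * a ν ω)) ∂μ =
      ∫⁻ ω, ENNReal.ofReal (exp (-θ * A ω)) ∂μ :=
    ((ha_id ν hν).comp (u := fun x => ENNReal.ofReal (exp (-θ * x))) (by fun_prop)).lintegral_eq
  have hS : ∫⁻ ω, ENNReal.ofReal (exp (θ * s (j + 1) ω)) ∂μ =
      ∫⁻ ω, ENNReal.ofReal (exp (θ * S ω)) ∂μ :=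
    (hs_id.comp (u := fun x => ENNReal.ofReal (exp (θ * x))) (by fun_prop)).lintegral_eq
  simp only [blockIncr]
  rw [lintegral_exp_mul_sub_sum (hs _) ha
      (has.symm.comp (measurable_pi_apply (j + 1)) measurable_id) haiid,
    hS, prod_congr rfl hA, prod_const]

theorem indepFun_blockIncr_lindley [MeasurableSpace Ω] {μ : Measure Ω} (hb : Monotone b)
    (ha : ∀ ν, Measurable (a ν)) (hs : ∀ m, Measurable (s m))
    (haiid : iIndepFun a μ) (hsiid : iIndepFun s μ)
    (has : IndepFun (fun ω ν => a ν ω) (fun ω m => s m ω) μ) (j : ℕ) :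
    IndepFun (blockIncr b a s j) (fun ω => lindley (blockIncr b a s · ω) j) μ := by
  let F : ℕ ⊕ ℕ → Ω → ℝ := Sum.elim a s
  have hFm : ∀ x, Measurable (F x) := by
    rintro (ν | m)
    exacts [ha ν, hs m]
  let M : Set (ℕ ⊕ ℕ) → MeasurableSpace Ω := fun S =>
    ⨆ x ∈ S, MeasurableSpace.comap (F x) inferInstance
  have hF_meas : ∀ {S : Set (ℕ ⊕ ℕ)} (x), x ∈ S → Measurable[M S] (F x) := fun x hx =>
    Measurable.of_comap_le (le_iSup₂ (f := fun x (_ : x ∈ _) =>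
      MeasurableSpace.comap (F x) inferInstance) x hx)
  let block (l : ℕ) : Set (ℕ ⊕ ℕ) :=
    {x | Sum.elim (fun ν => b l ≤ ν ∧ ν < b (l + 1)) (· = l + 1) x}
  let past : Set (ℕ ⊕ ℕ) := {x | Sum.elim (· < b j) (· ≤ j) x}
  have hblock (l : ℕ) : Measurable[M (block l)] (blockIncr b a s l) := by
    change Measurable[M (block l)] fun ω => F (.inr (l + 1)) ω - ∑ ν ∈ _, F (.inl ν) ω
    exact (hF_meas _ (by simp [block])).sub
      (Finset.measurable_fun_sum _ fun ν hν => hF_meas _ (by simpa [block] using hν))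
  have hpast : Measurable[M past] (fun ω => lindley (blockIncr b a s · ω) j) := by
    refine measurable_lindley fun l hl => (hblock l).mono (biSup_mono ?_) le_rfl
    rintro (ν | m) hx
    · exact hx.2.trans_le (hb hl)
    · exact (show m = l + 1 from hx).trans_le hl
  have hdisj : Disjoint (block j) past := by
    rw [Set.disjoint_left]
    rintro (ν | m) h₁ h₂
    · exact (show ν < b j from h₂).not_ge (show b j ≤ ν ∧ _ from h₁).1
    · exact (show m ≤ j from h₂).not_gt ((show m = j + 1 from h₁) ▸ j.lt_succ_self)
  have hF : iIndep (fun x => MeasurableSpace.comap (F x) inferInstance) μ :=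
    (iIndepFun.sumElim haiid hsiid has).iIndep
  exact indep_of_indep_of_le_right (indep_of_indep_of_le_left
    (indep_iSup_of_disjoint (fun x => (hFm x).comap_le) hF hdisj) (hblock j).comap_le)
    hpast.comap_le

end BlockIncrements

lemma exists_lt_of_lt_biSup_of_nonneg {ι : Type*} {s : Finset ι} {f : ι → ℝ} {c : ℝ}
    (hc : 0 ≤ c) (h : c < ⨆ i ∈ s, f i) : ∃ i ∈ s, c < f i := by
  by_contra! hle
  exact h.not_ge (Real.iSup_le (fun i => Real.iSup_le (hle i) hc) hc)

lemma round_robin_count_bounds {k i : ℕ} (hi : 1 ≤ i) (hik : i ≤ k) (n : ℕ) :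
    n < k * ((n + k - i) / k) + i ∧ k * ((n + k - i) / k) + i ≤ n + k := by
  have h₁ := Nat.lt_mul_div_succ (n + k - i) (show 0 < k by omega)
  have h₂ := Nat.mul_div_le (n + k - i) k
  rw [Nat.mul_add_one] at h₁
  omega

lemma cumArr_eq_sum_Ico {Ω : Type*} (a : ℕ → Ω → ℝ) (n : ℕ) (ω : Ω) :
    cumArr a n ω = ∑ ν ∈ Ico 1 n, a ν ω := by
  cases n with
  | zero => simp [cumArr]
  | succ n => rw [cumArr, Nat.add_sub_cancel, Ico_add_one_right_eq_Icc]

lemma cumArr_add_sum_Ico {Ω : Type*} (a : ℕ → Ω → ℝ) {m n : ℕ} (hm : 1 ≤ m) (hmn : m ≤ n)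
    (ω : Ω) : cumArr a m ω + ∑ ν ∈ Ico m n, a ν ω = cumArr a n ω := by
  rw [cumArr_eq_sum_Ico, cumArr_eq_sum_Ico, sum_Ico_consecutive _ hm hmn]

section ThinnedServer

variable {Ω : Type*} {k i n Y : ℕ} {a : ℕ → Ω → ℝ} {L : ℕ → ℕ → Ω → ℝ}

-- `min (k * j + i) n` is the arrival index `X_i (j+1)` of the `(j+1)`-st job of server `i`,
-- capped at `n` so that the block of inter-arrival times after the last job stops at job `n`.
lemma thinServerDep_sub_cumArr_le (hi : 1 ≤ i) (ha : ∀ ν ω, 0 ≤ a ν ω)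
    (hY : n < k * Y + i) (hY' : k * Y + i ≤ n + k) (ω : Ω) :
    thinServerDep k i a L Y ω - cumArr a n ω ≤
      lindley (blockIncr (fun j => min (k * j + i) n) a (L i) · ω) Y := by
  set b : ℕ → ℕ := fun j => min (k * j + i) n with hb_def
  have hb : Monotone b := fun _ _ h => min_le_min_right _ (by gcongr)
  have hA : 0 ≤ cumArr a n ω := sum_nonneg fun ν _ => ha ν ω
  have h₀ := add_nonneg (lindley_nonneg (blockIncr b a (L i) · ω) Y) hA
  rw [sub_le_iff_le_add]
  refine Real.iSup_le (fun p => Real.iSup_le (fun hp => ?_) h₀) h₀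
  rw [mem_Icc] at hp
  have hpn : k * (p - 1) + i ≤ n := by
    have := Nat.mul_le_mul_left k (show p - 1 + 1 ≤ Y by omega)
    rw [Nat.mul_add_one] at this
    omega
  have hsum := sum_Ico_blockIncr (a := a) (s := L i) hb (show p - 1 ≤ Y by omega) ω
  simp only [hb_def, min_eq_left hpn, min_eq_right hY.le, Nat.sub_add_cancel hp.1] at hsum
  have hlindley := sum_Ico_le_lindley (blockIncr b a (L i) · ω) (show p - 1 ≤ Y by omega)
  have hcum := cumArr_add_sum_Ico a (show 1 ≤ k * (p - 1) + i by omega) hpn ω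
  linarith

lemma measure_lt_reseqDep_sub_cumArr_le_sum [MeasurableSpace Ω] (μ : Measure Ω) {τ : ℝ}
    (hτ : 0 ≤ τ) (ha : ∀ ν ω, 0 ≤ a ν ω) :
    μ {ω | τ < reseqDep k a L n ω - cumArr a n ω} ≤
      ∑ i ∈ Icc 1 k, μ {ω | τ < thinServerDep k i a L ((n + k - i) / k) ω - cumArr a n ω} := by
  refine (measure_mono fun ω hω => ?_).trans (measure_biUnion_finset_le _ _)
  have hA : 0 ≤ cumArr a n ω := sum_nonneg fun ν _ => ha ν ω
  obtain ⟨i, hi, hlt⟩ :=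
    exists_lt_of_lt_biSup_of_nonneg (add_nonneg hτ hA) (lt_sub_iff_add_lt.1 hω)
  exact Set.mem_biUnion hi (lt_sub_iff_add_lt.2 hlt)

variable [MeasurableSpace Ω] {μ : Measure Ω} [IsProbabilityMeasure μ] {θ τ : ℝ}

theorem measure_lt_thinServerDep_sub_cumArr_le (hi : 1 ≤ i) (hY : n < k * Y + i)
    (hY' : k * Y + i ≤ n + k) (hθ : 0 ≤ θ) (hτ : 0 ≤ τ)
    (hameas : ∀ ν, Measurable (a ν)) (hLmeas : ∀ m, Measurable (L i m))
    (hanonneg : ∀ ν ω, 0 ≤ a ν ω) (haiid : iIndepFun a μ)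
    (haid : ∀ ν, 1 ≤ ν → IdentDistrib (a ν) (a 1) μ μ) (hLiid : iIndepFun (L i) μ)
    (hLid : ∀ m, 1 ≤ m → IdentDistrib (L i m) (L 1 1) μ μ)
    (hindep : IndepFun (fun ω ν => a ν ω) (fun ω m => L i m ω) μ)
    (hstab : (∫⁻ ω, ENNReal.ofReal (exp (θ * L 1 1 ω)) ∂μ) *
      (∫⁻ ω, ENNReal.ofReal (exp (-θ * a 1 ω)) ∂μ) ^ k ≤ 1) :
    μ {ω | τ < thinServerDep k i a L Y ω - cumArr a n ω} ≤
      ENNReal.ofReal (exp (-θ * τ)) * ∫⁻ ω, ENNReal.ofReal (exp (θ * L 1 1 ω)) ∂μ := by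
  set b : ℕ → ℕ := fun j => min (k * j + i) n
  set V := blockIncr b a (L i)
  have hincl : {ω | τ < thinServerDep k i a L Y ω - cumArr a n ω} ⊆
      {ω | τ < lindley (V · ω) Y} :=
    fun ω h => h.trans_le (thinServerDep_sub_cumArr_le hi hanonneg hY hY' ω)
  refine (measure_mono hincl).trans ?_
  cases Y with
  | zero => simp [lindley, hτ.not_gt]
  | succ Y =>
  have hn : k * Y + i ≤ n := by rw [Nat.mul_add_one] at hY'; omega
  have hb : Monotone b := fun _ _ h => min_le_min_right _ (by gcongr)
  have hV (j : ℕ) : Measurable (V j) :=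
    (hLmeas _).sub (Finset.measurable_fun_sum _ fun ν _ => hameas ν)
  have hind := indepFun_blockIncr_lindley hb hameas hLmeas haiid hLiid hindep
  have hmgf (j : ℕ) := lintegral_exp_blockIncr (b := b) hameas hLmeas haiid hindep θ j
    (fun ν hν => haid ν (by simp only [b, mem_Ico] at hν; omega)) (hLid _ j.succ_pos)
  have hfull (j : ℕ) (hj : j < Y) : ∫⁻ ω, ENNReal.ofReal (exp (θ * V j ω)) ∂μ ≤ 1 := by
    have hblock : #(Ico (b j) (b (j + 1))) = k := by
      have : k * (j + 1) ≤ k * Y := Nat.mul_le_mul_left k hj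
      simp only [b, Nat.card_Ico, Nat.mul_add_one] at this ⊢
      rw [min_eq_left (by omega), min_eq_left (by omega)]
      omega
    rw [hmgf, hblock]
    exact hstab
  calc μ {ω | τ < lindley (V · ω) (Y + 1)}
      = μ {ω | τ < V Y ω + lindley (V · ω) Y} := by simp_rw [lt_lindley_succ_iff hτ]
    _ ≤ ENNReal.ofReal (exp (-θ * τ)) * ∫⁻ ω, ENNReal.ofReal (exp (θ * V Y ω)) ∂μ :=
      measure_lt_add_le_of_indepFun (hV Y) (measurable_lindley fun j _ => hV j) (hind Y)
        (measure_lt_lindley_le hθ hV (fun j _ => hind j) hfull) τ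
    _ ≤ ENNReal.ofReal (exp (-θ * τ)) * ∫⁻ ω, ENNReal.ofReal (exp (θ * L 1 1 ω)) ∂μ := by
      rw [hmgf]
      gcongr
      exact mul_le_of_le_one_right'
        (pow_le_one₀ zero_le (lintegral_ofReal_exp_neg_mul_le_one hθ (hanonneg 1)))

end ThinnedServer

theorem thinning_resequencing_sojourn_bound_general
    {Ω : Type*} [MeasurableSpace Ω] (μ : Measure Ω) [IsProbabilityMeasure μ]
    (k : ℕ)
    (a : ℕ → Ω → ℝ) (L : ℕ → ℕ → Ω → ℝ)
    (hameas : ∀ ν, Measurable (a ν)) (hLmeas : ∀ i m, Measurable (L i m))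
    (hanonneg : ∀ ν ω, 0 ≤ a ν ω)
    (haiid : iIndepFun a μ)
    (haid : ∀ ν, 1 ≤ ν → IdentDistrib (a ν) (a 1) μ μ)
    (hLiid : ∀ i, 1 ≤ i → i ≤ k → iIndepFun (L i) μ)
    (hLid : ∀ i, 1 ≤ i → i ≤ k → ∀ m, 1 ≤ m → IdentDistrib (L i m) (L 1 1) μ μ)
    (hindep : IndepFun (fun ω (p : ℕ × ℕ) => L p.1 p.2 ω) (fun ω (ν : ℕ) => a ν ω) μ)
    (θ : ℝ) (hθ : 0 < θ)
    (hint : Integrable (fun ω => exp (θ * L 1 1 ω)) μ)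
    (hstab : (∫ ω, exp (θ * L 1 1 ω) ∂μ) * (∫ ω, exp (-θ * a 1 ω) ∂μ) ^ k ≤ 1) :
    ∀ n : ℕ, 1 ≤ n → ∀ τ : ℝ, 0 ≤ τ →
      μ {ω | τ < reseqDep k a L n ω - cumArr a n ω}
        ≤ ENNReal.ofReal ((k : ℝ) * (∫ ω, exp (θ * L 1 1 ω) ∂μ) * exp (-θ * τ)) := by
  intro n _ τ hτ
  have hML := ofReal_integral_eq_lintegral_ofReal hint (ae_of_all _ fun _ => (exp_pos _).le)
  have hstab' : (∫⁻ ω, ENNReal.ofReal (exp (θ * L 1 1 ω)) ∂μ) *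
      (∫⁻ ω, ENNReal.ofReal (exp (-θ * a 1 ω)) ∂μ) ^ k ≤ 1 := by
    rw [← hML, ← ofReal_integral_eq_lintegral_ofReal
        (integrable_exp_neg_mul hθ.le (hameas 1) (hanonneg 1))
        (ae_of_all _ fun _ => (exp_pos _).le),
      ← ENNReal.ofReal_pow (integral_nonneg fun _ => (exp_pos _).le),
      ← ENNReal.ofReal_mul (integral_nonneg fun _ => (exp_pos _).le)]
    exact ENNReal.ofReal_le_one.2 hstab
  have hserver (i : ℕ) (hi : i ∈ Icc 1 k) :=
    have hi := mem_Icc.1 hi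
    measure_lt_thinServerDep_sub_cumArr_le hi.1 (round_robin_count_bounds hi.1 hi.2 n).1
      (round_robin_count_bounds hi.1 hi.2 n).2 hθ.le hτ hameas (hLmeas i) hanonneg haiid haid
      (hLiid i hi.1 hi.2) (hLid i hi.1 hi.2)
      (hindep.comp (measurable_pi_lambda _ fun m => measurable_pi_apply (i, m)) measurable_id).symm
      hstab'
  calc μ {ω | τ < reseqDep k a L n ω - cumArr a n ω}
      ≤ ∑ i ∈ Icc 1 k, μ {ω | τ < thinServerDep k i a L ((n + k - i) / k) ω - cumArr a n ω} :=
        measure_lt_reseqDep_sub_cumArr_le_sum μ hτ hanonneg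
    _ ≤ ∑ _i ∈ Icc 1 k, ENNReal.ofReal (exp (-θ * τ)) *
          ∫⁻ ω, ENNReal.ofReal (exp (θ * L 1 1 ω)) ∂μ := sum_le_sum hserver
    _ = _ := by
        rw [sum_const, Nat.card_Icc, Nat.add_sub_cancel, nsmul_eq_mul, ← hML,
          ← ENNReal.ofReal_mul (exp_pos _).le, ← ENNReal.ofReal_natCast,
          ← ENNReal.ofReal_mul (Nat.cast_nonneg _), mul_comm (exp _), mul_assoc]

/-- **Sojourn time bound for a multi-server system with deterministic (round-robin)
thinning and resequencing.**  With i.i.d. inter-arrival times `a`, i.i.d. job service times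
at each of the `k` servers distributed as `L 1 1` and independent of the arrivals, and
`θ > 0` satisfying `E[exp (θ L 1 1)] · (E[exp (-θ a 1)])^k ≤ 1`, the resequenced sojourn
time `T n = D n - A n` satisfies `P[T n > τ] ≤ k · E[exp (θ L 1 1)] · exp (-θ τ)`. -/
theorem thinning_resequencing_sojourn_bound
    {Ω : Type*} [MeasurableSpace Ω] (μ : Measure Ω) [IsProbabilityMeasure μ]
    (k : ℕ) (hk : 1 ≤ k)
    (a : ℕ → Ω → ℝ) (L : ℕ → ℕ → Ω → ℝ)
    (hameas : ∀ ν, Measurable (a ν)) (hLmeas : ∀ i m, Measurable (L i m))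
    (hanonneg : ∀ ν ω, 0 ≤ a ν ω) (hLnonneg : ∀ i m ω, 0 ≤ L i m ω)
    (haiid : iIndepFun a μ)
    (haid : ∀ ν, 1 ≤ ν → IdentDistrib (a ν) (a 1) μ μ)
    (hLiid : ∀ i, 1 ≤ i → i ≤ k → iIndepFun (L i) μ)
    (hLid : ∀ i, 1 ≤ i → i ≤ k → ∀ m, 1 ≤ m → IdentDistrib (L i m) (L 1 1) μ μ)
    (hindep : IndepFun (fun ω (p : ℕ × ℕ) => L p.1 p.2 ω) (fun ω (ν : ℕ) => a ν ω) μ)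
    (θ : ℝ) (hθ : 0 < θ)
    (hint : Integrable (fun ω => exp (θ * L 1 1 ω)) μ)
    (hstab : (∫ ω, exp (θ * L 1 1 ω) ∂μ) * (∫ ω, exp (-θ * a 1 ω) ∂μ) ^ k ≤ 1) :
    ∀ n : ℕ, 1 ≤ n → ∀ τ : ℝ, 0 ≤ τ →
      μ {ω | τ < reseqDep k a L n ω - cumArr a n ω}
        ≤ ENNReal.ofReal ((k : ℝ) * (∫ ω, exp (θ * L 1 1 ω) ∂μ) * exp (-θ * τ)) :=
  thinning_resequencing_sojourn_bound_general μ k a L hameas hLmeas hanonneg haiid haid hLiid hLid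
    hindep θ hθ hint hstab
end

section
/- Let A : ℕ → ℝ be a nondecreasing sequence of arrival times with A(0) = 0, L(n) ≥ 0 job service times, and Z(n) ≥ 0 auxiliary times for n ≥ 1. Define the single-queue multi-server start-of-service times by V(1) = A(1) and V(n) = max{ A(n), V(n−1) + Z(n−1) } for n ≥ 2, and departures D(n) = V(n) + L(n). Then for all n ≥ 1, V(n) = max_{m ∈ [1,n]} { A(m) + Σ_{ν=m}^{n−1} Z(ν) } and D(n) = max_{m ∈ [1,n]} { A(m) + S(m,n) } with S(m,n) = L(n) + Σ_{ν=m}^{n−1} Z(ν); that is, the single-queue multi-server system is an exact S(m,n) server. Moreover, if the values Z(n) are replaced by pointwise larger nonnegative values Z'(n) ≥ Z(n), the resulting S'(m,n) satisfies D(n) ≤ max_{m ∈ [1,n]} { A(m) + S'(m,n) }, i.e. the system is an S'(m,n) server. -/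
/-!
Unrolling `V n = max (A n) (V (n - 1) + Z (n - 1))` once more adds `Z (n - 1)` to every
candidate `A m + ∑_{ν=m}^{n-2} Z ν` of the previous maximum (addition distributes over `max`)
and contributes the new candidate `A n` with an empty sum; this gives the max-plus formula
for `V` by induction, and `D n = V n + L n` shifts it by `L n`. Enlarging `Z` enlarges every
candidate, hence the maximum.
-/

open Finset

lemma Finset.sup'_Icc_add_one_right {α : Type*} [SemilatticeSup α] {a b : ℕ} (h : a ≤ b)
    (f : ℕ → α) :
    (Icc a (b + 1)).sup' (nonempty_Icc.mpr (by omega)) f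
      = f (b + 1) ⊔ (Icc a b).sup' (nonempty_Icc.mpr h) f := by
  have hIcc : Icc a (b + 1) = insert (b + 1) (Icc a b) := by
    ext x; simp only [mem_Icc, mem_insert]; omega
  rw [sup'_congr _ hIcc fun _ _ => rfl, sup'_insert]

theorem eq_sup'_of_maxplus_recursion {G : Type*} [AddCommGroup G] [LinearOrder G]
    [IsOrderedAddMonoid G] (A Z V : ℕ → G) (hV1 : V 1 = A 1)
    (hVrec : ∀ n, 2 ≤ n → V n = max (A n) (V (n - 1) + Z (n - 1))) (n : ℕ) (hn : 1 ≤ n) :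
    V n = (Icc 1 n).sup' (nonempty_Icc.mpr hn) (fun m => A m + ∑ ν ∈ Icc m (n - 1), Z ν) := by
  obtain ⟨k, rfl⟩ : ∃ k, n = k + 1 := ⟨n - 1, by omega⟩
  simp only [Nat.add_sub_cancel]
  induction k with
  | zero => simp [hV1]
  | succ k ih =>
    have hsum : ∀ m ∈ Icc 1 (k + 1),
        A m + ∑ ν ∈ Icc m (k + 1), Z ν = (A m + ∑ ν ∈ Icc m k, Z ν) + Z (k + 1) := by
      intro m hm
      rw [sum_Icc_succ_top (mem_Icc.mp hm).2, add_assoc]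
    have hstep : V (k + 1 + 1) = max (A (k + 1 + 1)) (V (k + 1) + Z (k + 1)) :=
      hVrec (k + 2) (by omega)
    rw [hstep, ih (by omega), sup'_Icc_add_one_right (Nat.le_add_left 1 k),
      sup'_congr _ rfl hsum, sup'_add, Icc_eq_empty_of_lt (Nat.lt_succ_self _), sum_empty,
      add_zero]

theorem single_queue_multiserver_maxplus_server_general
    (A L Z V D : ℕ → ℝ)
    (hV1 : V 1 = A 1)
    (hVrec : ∀ n, 2 ≤ n → V n = max (A n) (V (n - 1) + Z (n - 1)))
    (hD : ∀ n, D n = V n + L n) :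
    (∀ n, ∀ hn : 1 ≤ n,
      V n = (Finset.Icc 1 n).sup' (Finset.nonempty_Icc.mpr hn)
              (fun m => A m + ∑ ν ∈ Finset.Icc m (n - 1), Z ν) ∧
      D n = (Finset.Icc 1 n).sup' (Finset.nonempty_Icc.mpr hn)
              (fun m => A m + (L n + ∑ ν ∈ Finset.Icc m (n - 1), Z ν))) ∧
    (∀ Z' : ℕ → ℝ, (∀ n, Z n ≤ Z' n) → ∀ n, ∀ hn : 1 ≤ n,
      D n ≤ (Finset.Icc 1 n).sup' (Finset.nonempty_Icc.mpr hn)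
              (fun m => A m + (L n + ∑ ν ∈ Finset.Icc m (n - 1), Z' ν))) := by
  have hV := eq_sup'_of_maxplus_recursion A Z V hV1 hVrec
  have hDV : ∀ n (hn : 1 ≤ n), D n = (Icc 1 n).sup' (nonempty_Icc.mpr hn)
      (fun m => A m + (L n + ∑ ν ∈ Icc m (n - 1), Z ν)) := fun n hn => by
    rw [hD, hV n hn, sup'_add]
    exact sup'_congr _ rfl fun m _ => by ring
  refine ⟨fun n hn => ⟨hV n hn, hDV n hn⟩, fun Z' hZ' n hn => ?_⟩
  rw [hDV n hn]
  gcongr with m _ ν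
  exact hZ' ν

/-- **A single-queue multi-server system is an exact max-plus server.**
With arrival times `A` (nondecreasing, `A 0 = 0`), job service times `L n ≥ 0` and
auxiliary inter-idle times `Z n ≥ 0`, the start-of-service times follow the recursion
`V 1 = A 1`, `V n = max (A n) (V (n-1) + Z (n-1))`, and `D n = V n + L n`.  Then
`V n = max_{m ∈ [1,n]} (A m + ∑_{ν=m}^{n-1} Z ν)` and
`D n = max_{m ∈ [1,n]} (A m + S m n)` with `S(m,n) = L n + ∑_{ν=m}^{n-1} Z ν`,
i.e. the system is an exact `S(m,n)` server.  Moreover, replacing `Z` by pointwise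
larger values `Z'` yields `D n ≤ max_{m ∈ [1,n]} (A m + S' m n)`, i.e. the system is an
`S'(m,n)` server. -/
theorem single_queue_multiserver_maxplus_server
    (A L Z V D : ℕ → ℝ)
    (hA0 : A 0 = 0) (hAmono : Monotone A) (hL : ∀ n, 0 ≤ L n) (hZ : ∀ n, 0 ≤ Z n)
    (hV1 : V 1 = A 1)
    (hVrec : ∀ n, 2 ≤ n → V n = max (A n) (V (n - 1) + Z (n - 1)))
    (hD : ∀ n, D n = V n + L n) :
    (∀ n, ∀ hn : 1 ≤ n,
      V n = (Finset.Icc 1 n).sup' (Finset.nonempty_Icc.mpr hn)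
              (fun m => A m + ∑ ν ∈ Finset.Icc m (n - 1), Z ν) ∧
      D n = (Finset.Icc 1 n).sup' (Finset.nonempty_Icc.mpr hn)
              (fun m => A m + (L n + ∑ ν ∈ Finset.Icc m (n - 1), Z ν))) ∧
    (∀ Z' : ℕ → ℝ, (∀ n, Z n ≤ Z' n) → ∀ n, ∀ hn : 1 ≤ n,
      D n ≤ (Finset.Icc 1 n).sup' (Finset.nonempty_Icc.mpr hn)
              (fun m => A m + (L n + ∑ ν ∈ Finset.Icc m (n - 1), Z' ν))) :=
  single_queue_multiserver_maxplus_server_general A L Z V D hV1 hVrec hD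
end
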